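/- Fix s>1, a bounded open set U ⊆ ℝ^d and h₁>h>0. The inclusion map D^{(s)}_{L^∞,h₁}(U) → D^{(s)}_{L^∞,h}(U) is a compact operator: it maps the closed unit ball of D^{(s)}_{L^∞,h₁}(U) to a relatively compact subset of D^{(s)}_{L^∞,h}(U). -/

import Mathlib

open MeasureTheory Filter Set
open scoped BigOperators ENNReal NNReal Topology

noncomputable section

/-- The order `|α|` of a multi-index `α`. -/
def mOrder {d : ℕ} (α : Fin d → ℕ) : ℕ := ∑ i, α i

/-- The factorial `α!` of a multi-index `α`. -/
def mFact {d : ℕ} (α : Fin d → ℕ) : ℕ := ∏ i, Nat.factorial (α i)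

variable {d : ℕ} {F : Type*} [NormedAddCommGroup F] [NormedSpace ℝ F]

/-- First-order partial derivative `∂_i`. -/
def pd (i : Fin d) (f : (Fin d → ℝ) → F) : (Fin d → ℝ) → F :=
  fun x => fderiv ℝ f x (Pi.single i 1)

/-- Iterated partial derivative `∂_i^n`. -/
def pdPow (i : Fin d) : ℕ → ((Fin d → ℝ) → F) → ((Fin d → ℝ) → F)
  | 0 => id
  | n + 1 => fun f => pd i (pdPow i n f)

/-- Iterated partial derivative `∂^α` for a multi-index `α`. -/
def pdm (α : Fin d → ℕ) (f : (Fin d → ℝ) → F) : (Fin d → ℝ) → F :=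
  (List.finRange d).foldr (fun i g => pdPow i (α i) g) f

/-- The operator `D^α = i^{-|α|} ∂^α` for complex-valued functions. -/
def Dm (α : Fin d → ℕ) (f : (Fin d → ℝ) → ℂ) : (Fin d → ℝ) → ℂ :=
  fun x => (-Complex.I) ^ (mOrder α) * pdm α f x

/-- `φ` is a Beurling–Gevrey test function of class `(s)` on `U`. -/
def IsGevreyTest (s : ℝ) (U : Set (Fin d → ℝ)) (φ : (Fin d → ℝ) → F) : Prop :=
  ContDiff ℝ (⊤ : ℕ∞) φ ∧ HasCompactSupport φ ∧ tsupport φ ⊆ U ∧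
    ∀ h : ℝ, 0 < h → ∃ C : ℝ, ∀ (α : Fin d → ℕ) (x : Fin d → ℝ),
      ‖pdm α φ x‖ ≤ C * h ^ (mOrder α) * (mFact α : ℝ) ^ s

/-- The `ℓ^p`-type norm of a family of extended reals (sup for `p = ∞`). -/
def seqLpNorm {ι : Type*} (p : ℝ≥0∞) (w : ι → ℝ≥0∞) : ℝ≥0∞ :=
  if p = ∞ then ⨆ i, w i else (∑' i, (w i) ^ p.toReal) ^ (1 / p.toReal)

/-- The norm of the space `D^s_{L^p,h}(U)`:
`(∑_α h^{p|α|} ‖D^α φ‖_{L^p(U)}^p / α!^{ps})^{1/p}` (sup over `α` when `p = ∞`). -/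
def gNorm (s h : ℝ) (p : ℝ≥0∞) (U : Set (Fin d → ℝ)) (φ : (Fin d → ℝ) → F) : ℝ≥0∞ :=
  seqLpNorm p (fun α : Fin d → ℕ =>
    ENNReal.ofReal (h ^ (mOrder α) / (mFact α : ℝ) ^ s) *
      eLpNorm (pdm α φ) p (volume.restrict U))

/-- Membership in `D^{(s)}_{L^p,h}(U)`, the closure of `D^{(s)}(U)` in `D^s_{L^p,h}(U)`. -/
def MemD (s h : ℝ) (p : ℝ≥0∞) (U : Set (Fin d → ℝ)) (φ : (Fin d → ℝ) → F) : Prop :=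
  ContDiffOn ℝ (⊤ : ℕ∞) φ U ∧ gNorm s h p U φ < ⊤ ∧
    ∀ ε : ℝ, 0 < ε → ∃ ψ : (Fin d → ℝ) → F, IsGevreyTest s U ψ ∧
      gNorm s h p U (φ - ψ) < ENNReal.ofReal ε

/-- Membership in `Ḃ^{(s)}(U)`, the closure of `D^{(s)}(U)` with respect to the
family of norms `p_h`, `h > 0` (the norms being directed, closure with respect to the
whole family amounts to approximability in each norm separately). -/
def MemBdot (s : ℝ) (U : Set (Fin d → ℝ)) (φ : (Fin d → ℝ) → F) : Prop :=
  ContDiffOn ℝ (⊤ : ℕ∞) φ U ∧ (∀ h : ℝ, 0 < h → gNorm s h ∞ U φ < ⊤) ∧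
    ∀ h ε : ℝ, 0 < h → 0 < ε → ∃ ψ : (Fin d → ℝ) → F, IsGevreyTest s U ψ ∧
      gNorm s h ∞ U (φ - ψ) < ENNReal.ofReal ε

/-- A continuous linear functional on the Banach space `D^{(s)}_{L^q,h}(U)`. -/
def IsDualD (s h : ℝ) (q : ℝ≥0∞) (U : Set (Fin d → ℝ)) (T : ((Fin d → ℝ) → ℂ) → ℂ) : Prop :=
  (∀ φ ψ, MemD s h q U φ → MemD s h q U ψ → T (φ + ψ) = T φ + T ψ) ∧
  (∀ (c : ℂ) (φ), MemD s h q U φ → T (c • φ) = c * T φ) ∧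
  ∃ M : ℝ, ∀ φ, MemD s h q U φ → ‖T φ‖ ≤ M * (gNorm s h q U φ).toReal

/-- A continuous linear map from `Ḃ^{(s)}(U)` into a Banach space `E` (over `ℂ`). -/
def IsContLinBdot (s : ℝ) (U : Set (Fin d → ℝ)) {E : Type*} [NormedAddCommGroup E]
    [NormedSpace ℂ E] (f : ((Fin d → ℝ) → ℂ) → E) : Prop :=
  (∀ φ ψ, MemBdot s U φ → MemBdot s U ψ → f (φ + ψ) = f φ + f ψ) ∧
  (∀ (c : ℂ) (φ), MemBdot s U φ → f (c • φ) = c • f φ) ∧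
  ∃ h M : ℝ, 0 < h ∧ ∀ φ, MemBdot s U φ → ‖f φ‖ ≤ M * (gNorm s h ∞ U φ).toReal

/-!
Approximation by test functions reduces the claim to the ball of radius `2` of `D^{(s)}(U)` in
the `h₁`-norm. On that ball `|∂^α ψ| ≤ 2 α!^s / h₁^{|α|}` everywhere, so in the `h`-norm the
orders `|α| ≥ N` contribute at most `4 (h/h₁)^N`, which is small for large `N`. The finitely many
derivatives of order `< N` are uniformly bounded and uniformly Lipschitz. As `U` is bounded, they
are determined up to a small error by their values on a finite `δ`-net of `U`, and these values
range over a bounded subset of a finite-dimensional space, which has finite `η`-nets.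
-/

theorem norm_le_sum_norm_apply_single {ι : Type*} [Fintype ι] [DecidableEq ι]
    (L : (ι → ℝ) →L[ℝ] F) : ‖L‖ ≤ ∑ i, ‖L (Pi.single i 1)‖ := by
  refine L.opNorm_le_bound (by positivity) fun v => ?_
  calc ‖L v‖ = ‖∑ i, v i • L (Pi.single i 1)‖ := by
        conv_lhs => rw [pi_eq_sum_univ' v]
        simp [map_sum]
    _ ≤ ∑ i, ‖v‖ * ‖L (Pi.single i 1)‖ := by
        refine (norm_sum_le _ _).trans (Finset.sum_le_sum fun i _ => ?_)
        rw [norm_smul]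
        gcongr
        exact norm_le_pi_norm v i
    _ = (∑ i, ‖L (Pi.single i 1)‖) * ‖v‖ := by
        rw [Finset.sum_mul]; simp only [mul_comm]

theorem enorm_le_eLpNormEssSup_of_continuousOn {X : Type*} [TopologicalSpace X]
    [MeasurableSpace X] {μ : Measure X} [μ.IsOpenPosMeasure]
    {E : Type*} [NormedAddCommGroup E] {V : Set X} (hV : IsOpen V) {f : X → E}
    (hf : ContinuousOn f V) {x : X} (hx : x ∈ V) :
    ‖f x‖ₑ ≤ eLpNormEssSup f (μ.restrict V) := by
  by_contra! hlt
  set W := V ∩ f ⁻¹' {y | eLpNormEssSup f (μ.restrict V) < ‖y‖ₑ}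
  have hW : IsOpen W := hf.isOpen_inter_preimage hV (isOpen_lt continuous_const continuous_enorm)
  have hWnull : μ W = 0 := by
    have hnull := ae_iff.1 (ae_le_eLpNormEssSup (f := f) (μ := μ.restrict V))
    have hsub : W ⊆ {y | ¬‖f y‖ₑ ≤ eLpNormEssSup f (μ.restrict V)} ∩ V :=
      fun y hy => ⟨not_le.2 hy.2, hy.1⟩
    exact nonpos_iff_eq_zero.1
      ((measure_mono hsub).trans ((Measure.le_restrict_apply _ _).trans hnull.le))
  exact hW.measure_ne_zero μ ⟨x, hx, hlt⟩ hWnull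

theorem exists_finite_subset_dist_lt {X Y : Type*} [PseudoMetricSpace Y] {S : Set X}
    (E : X → Y) (hS : TotallyBounded (E '' S)) {η : ℝ} (hη : 0 < η) :
    ∃ Φ ⊆ S, Φ.Finite ∧ ∀ x ∈ S, ∃ y ∈ Φ, dist (E x) (E y) < η := by
  obtain ⟨t, hts, htfin, hcover⟩ := Metric.finite_approx_of_totallyBounded hS η hη
  obtain ⟨Φ, hΦS, hΦfin, hcover⟩ := exists_subset_image_finite_and
    (p := fun t => E '' S ⊆ ⋃ y ∈ t, Metric.ball y η) |>.1 ⟨t, hts, htfin, hcover⟩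
  refine ⟨Φ, hΦS, hΦfin, fun x hx => ?_⟩
  obtain ⟨_, ⟨y, hy, rfl⟩, hxy⟩ := mem_iUnion₂.1 (hcover ⟨x, hx, rfl⟩)
  exact ⟨y, hy, hxy⟩

variable {U : Set (Fin d → ℝ)}

theorem apply_le_mOrder (α : Fin d → ℕ) (i : Fin d) : α i ≤ mOrder α :=
  Finset.single_le_sum (fun _ _ => Nat.zero_le _) (Finset.mem_univ i)

theorem mOrder_add_single (α : Fin d → ℕ) (i : Fin d) :
    mOrder (α + Pi.single i 1) = mOrder α + 1 := by
  simp [mOrder, Finset.sum_add_distrib]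

theorem mFact_pos (α : Fin d → ℕ) : 0 < mFact α :=
  Finset.prod_pos fun i _ => Nat.factorial_pos (α i)

def directions (α : Fin d → ℕ) : List (Fin d) :=
  (List.finRange d).flatMap fun i => List.replicate (α i) i

theorem count_directions (α : Fin d → ℕ) (j : Fin d) : (directions α).count j = α j := by
  simp [directions, List.count_flatMap, List.count_replicate, ← Fin.sum_univ_def]

theorem directions_add_single_perm (α : Fin d → ℕ) (i : Fin d) :
    (directions (α + Pi.single i 1)).Perm (i :: directions α) := by
  refine List.perm_iff_count.2 fun j => ?_
  by_cases hij : i = j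
  · subst hij; simp [count_directions]
  · simp [count_directions, hij, Ne.symm hij]

def pdList (l : List (Fin d)) (f : (Fin d → ℝ) → F) : (Fin d → ℝ) → F := l.foldr pd f

theorem pdList_append (l₁ l₂ : List (Fin d)) (f : (Fin d → ℝ) → F) :
    pdList (l₁ ++ l₂) f = pdList l₁ (pdList l₂ f) :=
  List.foldr_append

theorem pdPow_eq_pdList (i : Fin d) (n : ℕ) (f : (Fin d → ℝ) → F) :
    pdPow i n f = pdList (List.replicate n i) f := by
  induction n with
  | zero => rfl
  | succ n ih => exact congrArg (pd i) ih

theorem pdm_eq_pdList (α : Fin d → ℕ) (f : (Fin d → ℝ) → F) :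
    pdm α f = pdList (directions α) f := by
  suffices ∀ l : List (Fin d), l.foldr (fun i g => pdPow i (α i) g) f
      = pdList (l.flatMap fun i => List.replicate (α i) i) f from this _
  intro l
  induction l with
  | nil => rfl
  | cons i l ih =>
    rw [List.foldr_cons, List.flatMap_cons, pdList_append, ← ih, pdPow_eq_pdList]

theorem ContDiffOn.pd (hU : IsOpen U) {f : (Fin d → ℝ) → F} (hf : ContDiffOn ℝ (⊤ : ℕ∞) f U)
    (i : Fin d) : ContDiffOn ℝ (⊤ : ℕ∞) (pd i f) U :=
  (hf.fderiv_of_isOpen hU (by simp)).clm_apply contDiffOn_const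

theorem ContDiffOn.pdList (hU : IsOpen U) {f : (Fin d → ℝ) → F}
    (hf : ContDiffOn ℝ (⊤ : ℕ∞) f U) (l : List (Fin d)) :
    ContDiffOn ℝ (⊤ : ℕ∞) (pdList l f) U := by
  induction l with
  | nil => exact hf
  | cons i l ih => exact ih.pd hU i

theorem ContDiff.pdList {f : (Fin d → ℝ) → F} (hf : ContDiff ℝ (⊤ : ℕ∞) f)
    (l : List (Fin d)) : ContDiff ℝ (⊤ : ℕ∞) (pdList l f) :=
  contDiffOn_univ.1 (hf.contDiffOn.pdList isOpen_univ l)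

theorem ContDiffOn.pdm (hU : IsOpen U) {f : (Fin d → ℝ) → F} (hf : ContDiffOn ℝ (⊤ : ℕ∞) f U)
    (α : Fin d → ℕ) : ContDiffOn ℝ (⊤ : ℕ∞) (pdm α f) U := by
  rw [pdm_eq_pdList]
  exact hf.pdList hU _

theorem ContDiff.pdm {f : (Fin d → ℝ) → F} (hf : ContDiff ℝ (⊤ : ℕ∞) f) (α : Fin d → ℕ) :
    ContDiff ℝ (⊤ : ℕ∞) (pdm α f) := by
  rw [pdm_eq_pdList]
  exact hf.pdList _

theorem pd_congr_eqOn (hU : IsOpen U) {f g : (Fin d → ℝ) → F} (h : EqOn f g U)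
    (i : Fin d) : EqOn (pd i f) (pd i g) U := fun x hx => by
  simp only [pd, (eventuallyEq_of_mem (hU.mem_nhds hx) h).fderiv_eq]

theorem pd_sub_eqOn (hU : IsOpen U) {f g : (Fin d → ℝ) → F}
    (hf : ContDiffOn ℝ (⊤ : ℕ∞) f U) (hg : ContDiffOn ℝ (⊤ : ℕ∞) g U) (i : Fin d) :
    EqOn (pd i (f - g)) (pd i f - pd i g) U := fun x hx => by
  have hfx := (hf.contDiffAt (hU.mem_nhds hx)).differentiableAt (by simp)
  have hgx := (hg.contDiffAt (hU.mem_nhds hx)).differentiableAt (by simp)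
  simp [pd, fderiv_sub hfx hgx]

theorem pdList_sub_eqOn (hU : IsOpen U) {f g : (Fin d → ℝ) → F}
    (hf : ContDiffOn ℝ (⊤ : ℕ∞) f U) (hg : ContDiffOn ℝ (⊤ : ℕ∞) g U) (l : List (Fin d)) :
    EqOn (pdList l (f - g)) (pdList l f - pdList l g) U := by
  induction l with
  | nil => exact fun _ _ => rfl
  | cons i l ih =>
    exact (pd_congr_eqOn hU ih i).trans (pd_sub_eqOn hU (hf.pdList hU l) (hg.pdList hU l) i)

theorem pdm_sub_eqOn (hU : IsOpen U) {f g : (Fin d → ℝ) → F}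
    (hf : ContDiffOn ℝ (⊤ : ℕ∞) f U) (hg : ContDiffOn ℝ (⊤ : ℕ∞) g U) (α : Fin d → ℕ) :
    EqOn (pdm α (f - g)) (pdm α f - pdm α g) U := by
  simpa only [pdm_eq_pdList] using pdList_sub_eqOn hU hf hg (directions α)

theorem pdm_sub {f g : (Fin d → ℝ) → F} (hf : ContDiff ℝ (⊤ : ℕ∞) f)
    (hg : ContDiff ℝ (⊤ : ℕ∞) g) (α : Fin d → ℕ) : pdm α (f - g) = pdm α f - pdm α g :=
  funext fun x => pdm_sub_eqOn isOpen_univ hf.contDiffOn hg.contDiffOn α (mem_univ x)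

theorem tsupport_pdList_subset (f : (Fin d → ℝ) → F) (l : List (Fin d)) :
    tsupport (pdList l f) ⊆ tsupport f := by
  induction l with
  | nil => exact subset_rfl
  | cons i l ih => exact (tsupport_fderiv_apply_subset ℝ _).trans ih

theorem tsupport_pdm_subset (f : (Fin d → ℝ) → F) (α : Fin d → ℕ) :
    tsupport (pdm α f) ⊆ tsupport f := by
  rw [pdm_eq_pdList]
  exact tsupport_pdList_subset f _

theorem pd_comm {f : (Fin d → ℝ) → F} (hf : ContDiff ℝ (⊤ : ℕ∞) f) (i j : Fin d) :
    pd i (pd j f) = pd j (pd i f) := by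
  funext x
  have hsymm : IsSymmSndFDerivAt ℝ f x := hf.contDiffAt.isSymmSndFDerivAt (by
    simp only [minSmoothness_of_isRCLikeNormedField]
    exact WithTop.coe_le_coe.2 le_top)
  have hdf : DifferentiableAt ℝ (fderiv ℝ f) x :=
    (hf.fderiv_right (le_of_eq ENat.coe_top_add_one)).differentiable (by simp) x
  have hpd2 (k m : Fin d) :
      pd k (pd m f) x = fderiv ℝ (fderiv ℝ f) x (Pi.single k 1) (Pi.single m 1) := by
    change fderiv ℝ (fun y => fderiv ℝ f y (Pi.single m 1)) x (Pi.single k 1) = _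
    simp [fderiv_clm_apply hdf (differentiableAt_const _)]
  rw [hpd2, hpd2, hsymm.eq]

theorem pdList_perm {f : (Fin d → ℝ) → F} (hf : ContDiff ℝ (⊤ : ℕ∞) f) {l₁ l₂ : List (Fin d)}
    (h : l₁.Perm l₂) : pdList l₁ f = pdList l₂ f := by
  induction h with
  | nil => rfl
  | cons i _ ih => exact congrArg (pd i) ih
  | swap i j l => exact pd_comm (hf.pdList l) j i
  | trans _ _ ih₁ ih₂ => exact ih₁.trans ih₂

theorem pd_pdm {f : (Fin d → ℝ) → F} (hf : ContDiff ℝ (⊤ : ℕ∞) f) (i : Fin d)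
    (α : Fin d → ℕ) : pd i (pdm α f) = pdm (α + Pi.single i 1) f := by
  rw [pdm_eq_pdList, pdm_eq_pdList, pdList_perm hf (directions_add_single_perm α i)]
  rfl

theorem norm_sub_le_of_norm_pd_le {g : (Fin d → ℝ) → F} (hg : Differentiable ℝ g) {M : ℝ}
    (hM : ∀ i x, ‖pd i g x‖ ≤ M) (x y : Fin d → ℝ) : ‖g x - g y‖ ≤ d * M * ‖x - y‖ := by
  have hbound (z) : ‖fderiv ℝ g z‖ ≤ d * M :=
    (norm_le_sum_norm_apply_single _).trans <| by
      simpa [pd] using Finset.sum_le_sum fun i (_ : i ∈ Finset.univ) => hM i z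
  exact convex_univ.norm_image_sub_le_of_norm_fderiv_le (fun z _ => hg z) (fun z _ => hbound z)
    (mem_univ y) (mem_univ x)

def gevreyWeight (s h : ℝ) (α : Fin d → ℕ) : ℝ := h ^ mOrder α / (mFact α : ℝ) ^ s

section gevreyNorm

variable {s h h₁ : ℝ}

theorem gevreyWeight_nonneg (hh : 0 ≤ h) (α : Fin d → ℕ) : 0 ≤ gevreyWeight s h α := by
  unfold gevreyWeight; positivity

theorem gevreyWeight_pos (hh : 0 < h) (α : Fin d → ℕ) : 0 < gevreyWeight s h α :=
  div_pos (pow_pos hh _) (Real.rpow_pos_of_pos (Nat.cast_pos.2 (mFact_pos α)) s)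

theorem gevreyWeight_le_gevreyWeight (hh : 0 ≤ h) (hle : h ≤ h₁) (α : Fin d → ℕ) :
    gevreyWeight s h α ≤ gevreyWeight s h₁ α := by
  unfold gevreyWeight; gcongr

theorem gevreyWeight_eq_pow_mul (hh₁ : h₁ ≠ 0) (α : Fin d → ℕ) :
    gevreyWeight s h α = (h / h₁) ^ mOrder α * gevreyWeight s h₁ α := by
  unfold gevreyWeight
  rw [div_pow]
  field_simp

theorem gNorm_eq_iSup (hh : 0 ≤ h) (φ : (Fin d → ℝ) → F) :
    gNorm s h ∞ U φ =
      ⨆ α, eLpNormEssSup (gevreyWeight s h α • pdm α φ) (volume.restrict U) := by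
  simp only [gNorm, seqLpNorm, if_pos, eLpNorm_exponent_top]
  refine iSup_congr fun α => ?_
  rw [eLpNormEssSup_const_smul, Real.enorm_of_nonneg (gevreyWeight_nonneg hh α)]
  rfl

theorem gNorm_le_of_forall_norm_le (hh : 0 ≤ h) (hU : MeasurableSet U) {φ : (Fin d → ℝ) → F}
    {C : ℝ} (hC : ∀ α, ∀ x ∈ U, gevreyWeight s h α * ‖pdm α φ x‖ ≤ C) :
    gNorm s h ∞ U φ ≤ ENNReal.ofReal C := by
  rw [gNorm_eq_iSup hh]
  refine iSup_le fun α => eLpNormEssSup_le_of_ae_bound ?_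
  filter_upwards [ae_restrict_mem hU] with x hx
  simpa [norm_smul, abs_of_nonneg (gevreyWeight_nonneg hh α)] using hC α x hx

theorem ofReal_gevreyWeight_mul_norm_pdm_le_gNorm (hh : 0 ≤ h) (hU : IsOpen U)
    {φ : (Fin d → ℝ) → F} (hφ : ContDiffOn ℝ (⊤ : ℕ∞) φ U) (α : Fin d → ℕ) {x : Fin d → ℝ}
    (hx : x ∈ U) : ENNReal.ofReal (gevreyWeight s h α * ‖pdm α φ x‖) ≤ gNorm s h ∞ U φ := by
  have hcont : ContinuousOn (gevreyWeight s h α • pdm α φ) U :=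
    continuousOn_const.smul (hφ.pdm hU α).continuousOn
  rw [gNorm_eq_iSup hh]
  refine le_trans ?_ (le_iSup _ α)
  refine le_trans (le_of_eq ?_) (enorm_le_eLpNormEssSup_of_continuousOn hU hcont hx)
  rw [Pi.smul_apply, enorm_smul, Real.enorm_of_nonneg (gevreyWeight_nonneg hh α),
    ← ofReal_norm, ENNReal.ofReal_mul (gevreyWeight_nonneg hh α)]

theorem gNorm_sub_le (hh : 0 ≤ h) (hU : IsOpen U) {f g : (Fin d → ℝ) → F}
    (hf : ContDiffOn ℝ (⊤ : ℕ∞) f U) (hg : ContDiffOn ℝ (⊤ : ℕ∞) g U) :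
    gNorm s h ∞ U (f - g) ≤ gNorm s h ∞ U f + gNorm s h ∞ U g := by
  simp only [gNorm_eq_iSup hh]
  refine iSup_le fun α => ?_
  have hae : gevreyWeight s h α • pdm α (f - g) =ᵐ[volume.restrict U]
      gevreyWeight s h α • pdm α f + -(gevreyWeight s h α • pdm α g) := by
    filter_upwards [ae_restrict_mem hU.measurableSet] with x hx
    rw [Pi.smul_apply, pdm_sub_eqOn hU hf hg α hx]
    simp [sub_eq_add_neg]
  rw [eLpNormEssSup_congr_ae hae]
  refine eLpNormEssSup_add_le.trans (add_le_add (le_iSup_of_le α le_rfl) (le_iSup_of_le α ?_))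
  exact eLpNormEssSup_mono_enorm_ae (ae_of_all _ fun x => by simp)

theorem gNorm_mono (hh : 0 ≤ h) (hle : h ≤ h₁) (φ : (Fin d → ℝ) → F) :
    gNorm s h ∞ U φ ≤ gNorm s h₁ ∞ U φ := by
  simp only [gNorm_eq_iSup hh, gNorm_eq_iSup (hh.trans hle)]
  refine iSup_mono fun α => eLpNormEssSup_mono_nnnorm_ae (ae_of_all _ fun x => ?_)
  simp only [Pi.smul_apply, nnnorm_smul]
  gcongr
  rw [← NNReal.coe_le_coe, coe_nnnorm, coe_nnnorm, Real.norm_of_nonneg (gevreyWeight_nonneg hh α),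
    Real.norm_of_nonneg (gevreyWeight_nonneg (hh.trans hle) α)]
  exact gevreyWeight_le_gevreyWeight hh hle α

theorem IsGevreyTest.memD (hh : 0 < h) (hU : IsOpen U) {ψ : (Fin d → ℝ) → F}
    (hψ : IsGevreyTest s U ψ) : MemD s h ∞ U ψ := by
  obtain ⟨C, hC⟩ := hψ.2.2.2 h⁻¹ (inv_pos.2 hh)
  have hbound : gNorm s h ∞ U ψ ≤ ENNReal.ofReal C := by
    refine gNorm_le_of_forall_norm_le hh.le hU.measurableSet fun α x _ => ?_
    calc gevreyWeight s h α * ‖pdm α ψ x‖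
        ≤ gevreyWeight s h α * (C * h⁻¹ ^ mOrder α * (mFact α : ℝ) ^ s) :=
          mul_le_mul_of_nonneg_left (hC α x) (gevreyWeight_nonneg hh.le α)
      _ = C := by
          have hfact : (0 : ℝ) < (mFact α : ℝ) ^ s :=
            Real.rpow_pos_of_pos (Nat.cast_pos.2 (mFact_pos α)) s
          unfold gevreyWeight
          rw [inv_pow]
          field_simp
  have hself : gNorm s h ∞ U (ψ - ψ) ≤ ENNReal.ofReal 0 := by
    refine gNorm_le_of_forall_norm_le hh.le hU.measurableSet fun α x hx => ?_
    rw [pdm_sub_eqOn hU hψ.1.contDiffOn hψ.1.contDiffOn α hx]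
    simp
  exact ⟨hψ.1.contDiffOn, hbound.trans_lt ENNReal.ofReal_lt_top,
    fun ε hε => ⟨ψ, hψ, hself.trans_lt (ENNReal.ofReal_lt_ofReal_iff hε |>.2 hε)⟩⟩

end gevreyNorm

def gevreyBall (s h : ℝ) (U : Set (Fin d → ℝ)) (r : ℝ) : Set ((Fin d → ℝ) → F) :=
  {ψ | IsGevreyTest s U ψ ∧ gNorm s h ∞ U ψ ≤ ENNReal.ofReal r}

section gevreyBall

variable {s h h₁ r : ℝ} {ψ ψ₀ : (Fin d → ℝ) → F}

theorem gevreyWeight_mul_norm_pdm_le_of_mem_gevreyBall (hh : 0 ≤ h) (hU : IsOpen U)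
    (hr : 0 ≤ r) (hψ : ψ ∈ gevreyBall s h U r) (α : Fin d → ℕ) (x : Fin d → ℝ) :
    gevreyWeight s h α * ‖pdm α ψ x‖ ≤ r := by
  by_cases hx : x ∈ U
  · exact (ENNReal.ofReal_le_ofReal_iff hr).1
      ((ofReal_gevreyWeight_mul_norm_pdm_le_gNorm hh hU hψ.1.1.contDiffOn α hx).trans hψ.2)
  · have hx' : x ∉ tsupport (pdm α ψ) := fun hx' => hx (hψ.1.2.2.1 (tsupport_pdm_subset ψ α hx'))
    rwa [image_eq_zero_of_notMem_tsupport hx', norm_zero, mul_zero]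

theorem norm_pdm_le_of_mem_gevreyBall (hh : 0 < h) (hU : IsOpen U) (hr : 0 ≤ r)
    (hψ : ψ ∈ gevreyBall s h U r) (α : Fin d → ℕ) (x : Fin d → ℝ) :
    ‖pdm α ψ x‖ ≤ r / gevreyWeight s h α :=
  (le_div_iff₀' (gevreyWeight_pos hh α)).2
    (gevreyWeight_mul_norm_pdm_le_of_mem_gevreyBall hh.le hU hr hψ α x)

theorem norm_pdm_sub_pdm_le_of_mem_gevreyBall (hh : 0 < h) (hU : IsOpen U) (hr : 0 ≤ r)
    (hψ : ψ ∈ gevreyBall s h U r) (α : Fin d → ℕ) {M : ℝ}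
    (hM : ∀ i, r / gevreyWeight s h (α + Pi.single i 1) ≤ M) (x y : Fin d → ℝ) :
    ‖pdm α ψ x - pdm α ψ y‖ ≤ d * M * ‖x - y‖ := by
  refine norm_sub_le_of_norm_pd_le ((hψ.1.1.pdm α).differentiable (by simp)) (fun i z => ?_) x y
  rw [pd_pdm hψ.1.1]
  exact (norm_pdm_le_of_mem_gevreyBall hh hU hr hψ _ z).trans (hM i)

theorem norm_pdm_sub_le_of_dist_le {M δ η : ℝ}
    (hh : 0 < h) (hU : IsOpen U) (hr : 0 ≤ r) (hψ : ψ ∈ gevreyBall s h U r)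
    (hψ₀ : ψ₀ ∈ gevreyBall s h U r) (α : Fin d → ℕ)
    (hM0 : 0 ≤ M) (hM : ∀ i, r / gevreyWeight s h (α + Pi.single i 1) ≤ M)
    {x t : Fin d → ℝ} (hxt : dist x t ≤ δ) (ht : ‖pdm α ψ₀ t - pdm α ψ t‖ ≤ η) :
    ‖pdm α ψ₀ x - pdm α ψ x‖ ≤ 2 * (d * M) * δ + η := by
  have hlip {χ : (Fin d → ℝ) → F} (hχ : χ ∈ gevreyBall s h U r) (y z : Fin d → ℝ)
      (hyz : dist y z ≤ δ) :
      dist (pdm α χ y) (pdm α χ z) ≤ d * M * δ := by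
    rw [dist_eq_norm]
    refine (norm_pdm_sub_pdm_le_of_mem_gevreyBall hh hU hr hχ α hM y z).trans ?_
    rw [← dist_eq_norm]
    gcongr
  rw [← dist_eq_norm] at ht ⊢
  calc dist (pdm α ψ₀ x) (pdm α ψ x)
      ≤ dist (pdm α ψ₀ x) (pdm α ψ₀ t) + dist (pdm α ψ₀ t) (pdm α ψ t)
        + dist (pdm α ψ t) (pdm α ψ x) := dist_triangle4 _ _ _ _
    _ ≤ d * M * δ + η + d * M * δ := by
        gcongr
        · exact hlip hψ₀ x t hxt
        · exact hlip hψ t x (dist_comm x t ▸ hxt)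
    _ = 2 * (d * M) * δ + η := by ring

theorem gevreyWeight_mul_norm_pdm_sub_le (hh : 0 ≤ h) (hh₁ : 0 < h₁) (hU : IsOpen U)
    (hr : 0 ≤ r) (hψ : ψ ∈ gevreyBall s h₁ U r) (hψ₀ : ψ₀ ∈ gevreyBall s h₁ U r)
    (α : Fin d → ℕ) (x : Fin d → ℝ) :
    gevreyWeight s h α * ‖pdm α ψ x - pdm α ψ₀ x‖ ≤ 2 * r * (h / h₁) ^ mOrder α := by
  have hw := gevreyWeight_nonneg (s := s) hh₁.le α
  rw [gevreyWeight_eq_pow_mul hh₁.ne', mul_assoc]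
  calc (h / h₁) ^ mOrder α * (gevreyWeight s h₁ α * ‖pdm α ψ x - pdm α ψ₀ x‖)
      ≤ (h / h₁) ^ mOrder α *
          (gevreyWeight s h₁ α * ‖pdm α ψ x‖ + gevreyWeight s h₁ α * ‖pdm α ψ₀ x‖) := by
        rw [← mul_add]
        gcongr
        exact norm_sub_le _ _
    _ ≤ (h / h₁) ^ mOrder α * (r + r) := by
        gcongr
        · exact gevreyWeight_mul_norm_pdm_le_of_mem_gevreyBall hh₁.le hU hr hψ α x
        · exact gevreyWeight_mul_norm_pdm_le_of_mem_gevreyBall hh₁.le hU hr hψ₀ α x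
    _ = 2 * r * (h / h₁) ^ mOrder α := by ring

theorem exists_finite_subset_norm_pdm_sub_lt [ProperSpace F] (hh : 0 < h) (hU : IsOpen U)
    (hr : 0 ≤ r) (N : ℕ) (T : Finset (Fin d → ℝ)) {η : ℝ} (hη : 0 < η) :
    ∃ Φ ⊆ gevreyBall (F := F) s h U r, Φ.Finite ∧ ∀ ψ ∈ gevreyBall s h U r, ∃ ψ₀ ∈ Φ,
      ∀ α ≤ (fun _ => N), ∀ t ∈ T, ‖pdm α ψ₀ t - pdm α ψ t‖ < η := by
  obtain ⟨M, hM⟩ := ((finite_Iic fun _ : Fin d => N).image fun α => r / gevreyWeight s h α).bddAbove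
  have hM0 : 0 ≤ M :=
    (div_nonneg hr (gevreyWeight_nonneg hh.le 0)).trans (hM ⟨0, fun _ => Nat.zero_le N, rfl⟩)
  let E : ((Fin d → ℝ) → F) → (Iic (fun _ : Fin d => N) × T → F) :=
    fun ψ p => pdm p.1 ψ p.2
  have hE : TotallyBounded (E '' gevreyBall s h U r) := by
    refine (isCompact_closedBall 0 M).totallyBounded.subset ?_
    rintro _ ⟨ψ, hψ, rfl⟩
    rw [mem_closedBall_zero_iff, pi_norm_le_iff_of_nonneg hM0]
    exact fun p => (norm_pdm_le_of_mem_gevreyBall hh hU hr hψ _ _).trans (hM ⟨p.1, p.1.2, rfl⟩)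
  obtain ⟨Φ, hΦ, hΦfin, hnet⟩ := exists_finite_subset_dist_lt E hE hη
  refine ⟨Φ, hΦ, hΦfin, fun ψ hψ => ?_⟩
  obtain ⟨ψ₀, hψ₀Φ, hdist⟩ := hnet ψ hψ
  refine ⟨ψ₀, hψ₀Φ, fun α hα t ht => ?_⟩
  rw [← dist_eq_norm, dist_comm]
  exact (dist_le_pi_dist (E ψ) (E ψ₀) (⟨α, hα⟩, ⟨t, ht⟩)).trans_lt hdist

theorem exists_finite_net_gevreyBall [ProperSpace F] {ε : ℝ} (hU : IsOpen U)
    (hUb : Bornology.IsBounded U) (hh : 0 < h) (hh₁ : h < h₁) (hr : 0 ≤ r) (hε : 0 < ε) :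
    ∃ Φ ⊆ gevreyBall (F := F) s h₁ U r, Φ.Finite ∧
      ∀ ψ ∈ gevreyBall s h₁ U r, ∃ ψ₀ ∈ Φ, gNorm s h ∞ U (ψ₀ - ψ) ≤ ENNReal.ofReal ε := by
  have h₁pos : 0 < h₁ := hh.trans hh₁
  obtain ⟨N, hN⟩ : ∃ N, ∀ n ≥ N, 2 * r * (h / h₁) ^ n < ε := by
    have hq := (tendsto_pow_atTop_nhds_zero_of_lt_one (div_nonneg hh.le h₁pos.le)
      ((div_lt_one h₁pos).2 hh₁)).const_mul (2 * r)
    rw [mul_zero] at hq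
    exact eventually_atTop.1 (hq.eventually_lt_const hε)
  have hlow : (Iic fun _ : Fin d => N).Finite := finite_Iic _
  have hle_const {α : Fin d → ℕ} (hα : mOrder α ≤ N) : α ≤ fun _ => N :=
    fun i => (apply_le_mOrder α i).trans hα
  obtain ⟨M, hM⟩ := (hlow.image fun α => r / gevreyWeight s h₁ α).bddAbove
  obtain ⟨W, hW⟩ := (hlow.image (gevreyWeight s h)).bddAbove
  have hM0 : 0 ≤ M :=
    (div_nonneg hr (gevreyWeight_nonneg h₁pos.le 0)).trans (hM ⟨0, fun _ => Nat.zero_le N, rfl⟩)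
  have hW0 : 0 ≤ W := (gevreyWeight_nonneg hh.le 0).trans (hW ⟨0, fun _ => Nat.zero_le N, rfl⟩)
  obtain ⟨η, hη, hWη⟩ := exists_pos_mul_lt (half_pos hε) W
  obtain ⟨δ, hδ, hWδ⟩ := exists_pos_mul_lt (half_pos hε) (W * (2 * (d * M)))
  obtain ⟨T, -, hTfin, hTcover⟩ := Metric.finite_approx_of_totallyBounded
    (hUb.isCompact_closure.totallyBounded.subset subset_closure) δ hδ
  obtain ⟨T, rfl⟩ := hTfin.exists_finset_coe
  obtain ⟨Φ, hΦ, hΦfin, hnet⟩ := exists_finite_subset_norm_pdm_sub_lt (F := F) h₁pos hU hr N T hη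
  refine ⟨Φ, hΦ, hΦfin, fun ψ hψ => ?_⟩
  obtain ⟨ψ₀, hψ₀Φ, hclose⟩ := hnet ψ hψ
  have hψ₀ := hΦ hψ₀Φ
  refine ⟨ψ₀, hψ₀Φ, gNorm_le_of_forall_norm_le hh.le hU.measurableSet fun α x hx => ?_⟩
  rw [pdm_sub hψ₀.1.1 hψ.1.1, Pi.sub_apply]
  rcases lt_or_ge (mOrder α) N with hα | hα
  · obtain ⟨t, ht, hxt⟩ : ∃ t ∈ T, dist x t < δ := by simpa using hTcover hx
    have hαN : α ≤ fun _ => N := hle_const hα.le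
    have hM' (i : Fin d) : r / gevreyWeight s h₁ (α + Pi.single i 1) ≤ M :=
      hM ⟨_, hle_const (by rw [mOrder_add_single]; omega), rfl⟩
    calc gevreyWeight s h α * ‖pdm α ψ₀ x - pdm α ψ x‖
        ≤ W * (2 * (d * M) * δ + η) :=
          mul_le_mul (hW ⟨α, hαN, rfl⟩) (norm_pdm_sub_le_of_dist_le h₁pos hU hr hψ hψ₀ α
            hM0 hM' hxt.le (hclose α hαN t ht).le) (norm_nonneg _) hW0
      _ ≤ ε := by nlinarith
  · exact (gevreyWeight_mul_norm_pdm_sub_le hh.le h₁pos hU hr hψ₀ hψ α x).trans (hN _ hα).le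

end gevreyBall

theorem statement_13_general {d : ℕ} (s : ℝ)
    (U : Set (Fin d → ℝ)) (hU : IsOpen U) (hUb : Bornology.IsBounded U)
    (h h₁ : ℝ) (hh : 0 < h) (hh1 : h < h₁) :
    ∀ ε : ℝ, 0 < ε → ∃ Φ : Set ((Fin d → ℝ) → ℂ), Φ.Finite ∧
      (∀ ψ ∈ Φ, MemD s h ∞ U ψ) ∧
      ∀ φ : (Fin d → ℝ) → ℂ, MemD s h₁ ∞ U φ → gNorm s h₁ ∞ U φ ≤ 1 →
        ∃ ψ ∈ Φ, gNorm s h ∞ U (φ - ψ) < ENNReal.ofReal ε := by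
  intro ε hε
  have hh₁ : 0 < h₁ := hh.trans hh1
  obtain ⟨Φ, hΦ, hΦfin, hnet⟩ :=
    exists_finite_net_gevreyBall (F := ℂ) (r := 2) hU hUb hh hh1 zero_le_two (half_pos hε)
  refine ⟨Φ, hΦfin, fun ψ hψ => (hΦ hψ).1.memD hh hU, fun φ hφ hφ1 => ?_⟩
  obtain ⟨ψ, hψ, hφψ⟩ := hφ.2.2 (min (ε / 2) 1) (by positivity)
  have hφψ_smooth : ContDiffOn ℝ (⊤ : ℕ∞) (φ - ψ) U := hφ.1.sub hψ.1.contDiffOn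
  have hψball : ψ ∈ gevreyBall s h₁ U 2 := by
    refine ⟨hψ, ?_⟩
    calc gNorm s h₁ ∞ U ψ = gNorm s h₁ ∞ U (φ - (φ - ψ)) := by rw [sub_sub_cancel]
      _ ≤ gNorm s h₁ ∞ U φ + gNorm s h₁ ∞ U (φ - ψ) := gNorm_sub_le hh₁.le hU hφ.1 hφψ_smooth
      _ ≤ 1 + ENNReal.ofReal 1 := add_le_add hφ1 (hφψ.le.trans (by simp))
      _ = ENNReal.ofReal 2 := by norm_num
  obtain ⟨ψ₀, hψ₀Φ, hψ₀⟩ := hnet ψ hψball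
  refine ⟨ψ₀, hψ₀Φ, ?_⟩
  calc gNorm s h ∞ U (φ - ψ₀) = gNorm s h ∞ U ((φ - ψ) - (ψ₀ - ψ)) := by
        rw [sub_sub_sub_cancel_right]
    _ ≤ gNorm s h ∞ U (φ - ψ) + gNorm s h ∞ U (ψ₀ - ψ) :=
        gNorm_sub_le hh.le hU hφψ_smooth ((hΦ hψ₀Φ).1.1.sub hψ.1).contDiffOn
    _ < ENNReal.ofReal (ε / 2) + ENNReal.ofReal (ε / 2) := by
        refine ENNReal.add_lt_add_of_lt_of_le (hψ₀.trans_lt ENNReal.ofReal_lt_top).ne ?_ hψ₀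
        exact (gNorm_mono hh.le hh1.le _).trans_lt (hφψ.trans_le (by simp))
    _ = ENNReal.ofReal ε := by rw [← ENNReal.ofReal_add (by positivity) (by positivity), add_halves]

/-- Fix `s > 1`, a bounded open set `U ⊆ ℝ^d` and `h₁ > h > 0`. The
inclusion `D^{(s)}_{L^∞,h₁}(U) → D^{(s)}_{L^∞,h}(U)` is a compact operator: the image of
the closed unit ball is relatively compact, i.e. totally bounded, in the `h`-norm. -/
theorem statement_13 {d : ℕ} (s : ℝ) (hs : 1 < s)
    (U : Set (Fin d → ℝ)) (hU : IsOpen U) (hUb : Bornology.IsBounded U)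
    (h h₁ : ℝ) (hh : 0 < h) (hh1 : h < h₁) :
    ∀ ε : ℝ, 0 < ε → ∃ Φ : Set ((Fin d → ℝ) → ℂ), Φ.Finite ∧
      (∀ ψ ∈ Φ, MemD s h ∞ U ψ) ∧
      ∀ φ : (Fin d → ℝ) → ℂ, MemD s h₁ ∞ U φ → gNorm s h₁ ∞ U φ ≤ 1 →
        ∃ ψ ∈ Φ, gNorm s h ∞ U (φ - ψ) < ENNReal.ofReal ε :=
  statement_13_general s U hU hUb h h₁ hh hh1
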